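/- With the notation of the previous statement, (T_1 ∘ T_2) ∘ σ ∘ (T_1^{-1} ∘ T_2^{-1}) = (T_1² ∘ T_2²) ∘ σ, where σ(z) = 1/z̄. -/

import Mathlib

open scoped Classical

open Complex

/-- The inner annulus `S'₂ = {z ∈ ℂ : 1/4 ≤ |z| ≤ 1/2}`. -/
def annulusInner : Set ℂ := {z : ℂ | 1/4 ≤ ‖z‖ ∧ ‖z‖ ≤ 1/2}

/-- The outer annulus `S''₂ = {z ∈ ℂ : 2 ≤ |z| ≤ 4}`. -/
def annulusOuter : Set ℂ := {z : ℂ | 2 ≤ ‖z‖ ∧ ‖z‖ ≤ 4}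

/-- The `k`-th power of the Dehn twist `T₁ z = e^{2πi(1 - 1/(2|z|))} z` of the inner
annulus, extended by the identity outside it. -/
noncomputable def twistInnerPow (k : ℤ) (z : ℂ) : ℂ :=
  if z ∈ annulusInner then
    Complex.exp (2 * Real.pi * I * (k : ℂ) * (1 - 1 / (2 * (‖z‖ : ℂ)))) * z
  else z

/-- The `l`-th power of the Dehn twist `T₂ z = e^{2πi(|z|/2 - 1)} z` of the outer
annulus, extended by the identity outside it. -/
noncomputable def twistOuterPow (l : ℤ) (z : ℂ) : ℂ :=
  if z ∈ annulusOuter then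
    Complex.exp (2 * Real.pi * I * (l : ℂ) * ((‖z‖ : ℂ) / 2 - 1)) * z
  else z

/-- The antiholomorphic involution `σ z = 1 / conj z`. -/
noncomputable def sigmaInv (z : ℂ) : ℂ := 1 / (starRingEnd ℂ) z

/-!
Both twists are rotations `z ↦ exp (i θ(|z|)) z` supported on an annulus. The reflection
`σ z = 1 / z̄` commutes with rotations and inverts `|z|`, so it exchanges the two annuli, and the
profiles match up as `2π (1/(2r) - 1) = -2π (1 - 1/(2r))`: hence `σ T₂ σ = T₁⁻¹` and
`σ T₁ σ = T₂⁻¹`. Pushing `σ` to the right turns the left side into `T₁ T₂ T₂ T₁ σ`, and `T₁`, `T₂`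
commute because their supports are disjoint.
-/

open Set

noncomputable def radialTwist (S : Set ℝ) (θ : ℝ → ℝ) (z : ℂ) : ℂ :=
  if ‖z‖ ∈ S then exp (θ ‖z‖ * I) * z else z

section radialTwist

variable {S T : Set ℝ} {θ φ : ℝ → ℝ}

lemma norm_radialTwist (z : ℂ) : ‖radialTwist S θ z‖ = ‖z‖ := by
  unfold radialTwist
  split_ifs <;> simp [norm_exp_ofReal_mul_I]

lemma radialTwist_radialTwist (z : ℂ) :
    radialTwist S θ (radialTwist S φ z) = radialTwist S (θ + φ) z := by
  rw [radialTwist, norm_radialTwist, radialTwist, radialTwist]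
  split_ifs
  · rw [← mul_assoc, ← exp_add, ← add_mul, Pi.add_apply, ofReal_add]
  · rfl

lemma radialTwist_of_notMem {z : ℂ} (h : ‖z‖ ∉ S) : radialTwist S θ z = z :=
  if_neg h

lemma radialTwist_comm_of_disjoint (h : Disjoint S T) (z : ℂ) :
    radialTwist S θ (radialTwist T φ z) = radialTwist T φ (radialTwist S θ z) := by
  by_cases hS : ‖z‖ ∈ S
  · have hT : ‖z‖ ∉ T := h.notMem_of_mem_left hS
    have hT' : ‖radialTwist S θ z‖ ∉ T := by rwa [norm_radialTwist]
    rw [radialTwist_of_notMem hT, radialTwist_of_notMem hT']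
  · have hS' : ‖radialTwist T φ z‖ ∉ S := by rwa [norm_radialTwist]
    rw [radialTwist_of_notMem hS, radialTwist_of_notMem hS']

lemma sigmaInv_sigmaInv (z : ℂ) : sigmaInv (sigmaInv z) = z := by
  simp [sigmaInv]

lemma norm_sigmaInv (z : ℂ) : ‖sigmaInv z‖ = ‖z‖⁻¹ := by
  simp [sigmaInv]

lemma sigmaInv_exp_mul_I_mul (t : ℝ) (z : ℂ) :
    sigmaInv (exp (t * I) * z) = exp (t * I) * sigmaInv z := by
  have : starRingEnd ℂ (exp (t * I)) = (exp (t * I))⁻¹ := by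
    rw [← exp_conj, ← exp_neg, map_mul, conj_ofReal, conj_I, mul_neg]
  simp only [sigmaInv, map_mul, this, one_div, mul_inv, inv_inv]

-- No `z ≠ 0` is needed: `σ 0 = 0` and `(0 : ℝ)⁻¹ = 0`, so `0` is fixed on both sides.
lemma sigmaInv_radialTwist (z : ℂ) :
    sigmaInv (radialTwist S θ z) = radialTwist (Inv.inv ⁻¹' S) (fun r ↦ θ r⁻¹) (sigmaInv z) := by
  simp only [radialTwist, norm_sigmaInv, mem_preimage, inv_inv]
  split_ifs
  · exact sigmaInv_exp_mul_I_mul _ z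
  · rfl

end radialTwist

lemma twistInnerPow_eq_radialTwist (k : ℤ) :
    twistInnerPow k =
      radialTwist (Icc (1/4) (1/2)) (fun r ↦ 2 * Real.pi * k * (1 - 1 / (2 * r))) := by
  ext z
  unfold twistInnerPow radialTwist
  congr 1
  push_cast
  ring_nf

lemma twistOuterPow_eq_radialTwist (l : ℤ) :
    twistOuterPow l = radialTwist (Icc 2 4) (fun r ↦ 2 * Real.pi * l * (r / 2 - 1)) := by
  ext z
  unfold twistOuterPow radialTwist
  congr 1
  push_cast
  ring_nf

lemma inv_preimage_Icc_two_four : Inv.inv ⁻¹' Icc (2 : ℝ) 4 = Icc (1/4) (1/2) := by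
  ext r
  simp only [mem_preimage, mem_Icc]
  rcases le_or_gt r 0 with hr | hr
  · have : r⁻¹ ≤ 0 := inv_nonpos.mpr hr
    constructor <;> rintro ⟨h, -⟩ <;> linarith
  · rw [le_inv_comm₀ two_pos hr, inv_le_comm₀ hr four_pos]
    norm_num [and_comm]

lemma twistInnerPow_twistInnerPow (j k : ℤ) (z : ℂ) :
    twistInnerPow j (twistInnerPow k z) = twistInnerPow (j + k) z := by
  simp only [twistInnerPow_eq_radialTwist, radialTwist_radialTwist]
  congr 1
  ext r
  simp only [Pi.add_apply]
  push_cast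
  ring

lemma twistOuterPow_twistOuterPow (j k : ℤ) (z : ℂ) :
    twistOuterPow j (twistOuterPow k z) = twistOuterPow (j + k) z := by
  simp only [twistOuterPow_eq_radialTwist, radialTwist_radialTwist]
  congr 1
  ext r
  simp only [Pi.add_apply]
  push_cast
  ring

lemma twistInnerPow_twistOuterPow (k l : ℤ) (z : ℂ) :
    twistInnerPow k (twistOuterPow l z) = twistOuterPow l (twistInnerPow k z) := by
  have hdisj : Disjoint (Icc (1/4 : ℝ) (1/2)) (Icc 2 4) :=
    (Iic_disjoint_Ici.mpr (by norm_num)).mono Icc_subset_Iic_self Icc_subset_Ici_self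
  rw [twistInnerPow_eq_radialTwist, twistOuterPow_eq_radialTwist]
  exact radialTwist_comm_of_disjoint hdisj z

lemma sigmaInv_twistOuterPow (l : ℤ) (z : ℂ) :
    sigmaInv (twistOuterPow l z) = twistInnerPow (-l) (sigmaInv z) := by
  rw [twistOuterPow_eq_radialTwist, sigmaInv_radialTwist, inv_preimage_Icc_two_four,
    twistInnerPow_eq_radialTwist]
  congr 2
  ext r
  push_cast
  ring

lemma sigmaInv_twistInnerPow (k : ℤ) (z : ℂ) :
    sigmaInv (twistInnerPow k z) = twistOuterPow (-k) (sigmaInv z) := by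
  rw [← sigmaInv_sigmaInv (twistOuterPow _ _), sigmaInv_twistOuterPow, neg_neg, sigmaInv_sigmaInv]

theorem twist_sigma_conjugation_general (z : ℂ) :
    twistInnerPow 1 (twistOuterPow 1 (sigmaInv (twistInnerPow (-1) (twistOuterPow (-1) z)))) =
      twistInnerPow 2 (twistOuterPow 2 (sigmaInv z)) := by
  rw [sigmaInv_twistInnerPow, sigmaInv_twistOuterPow, neg_neg,
    twistOuterPow_twistOuterPow, ← twistInnerPow_twistOuterPow, twistInnerPow_twistInnerPow]
  rfl

/-- `(T₁ ∘ T₂) ∘ σ ∘ (T₁⁻¹ ∘ T₂⁻¹) = (T₁² ∘ T₂²) ∘ σ`. -/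
theorem twist_sigma_conjugation (z : ℂ) (hz : z ≠ 0) :
    twistInnerPow 1 (twistOuterPow 1 (sigmaInv (twistInnerPow (-1) (twistOuterPow (-1) z)))) =
      twistInnerPow 2 (twistOuterPow 2 (sigmaInv z)) :=
  twist_sigma_conjugation_general z
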